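/- (Equivalence in non-extended RL) For every agent π and every non-extended environment μ, the result of π_RC interacting with μ equals the result of π interacting with μ. -/

import Mathlib

/-- Alternating history x₁y₁...xₙ ending in a percept: the first percept
    together with the list of subsequent (action, percept) pairs. -/
abbrev Hist (P A : Type*) := P × List (A × P)

/-- An agent maps nonempty alternating percept-action histories
    (ending in a percept) to actions. -/
abbrev Agent (P A : Type*) := Hist P A → A

/-- `h` is possible for `π`: for all 1 ≤ i < n, π(x₁y₁...xᵢ) = yᵢ. -/
def Possible {P A : Type*} (π : Agent P A) (h : Hist P A) : Prop :=
  ∀ i, (hi : i < h.2.length) → π (h.1, h.2.take i) = (h.2.get ⟨i, hi⟩).1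

/-- Auxiliary recursion for the reality check. -/
def RCAux {P A : Type*} [DecidableEq A] (π : Agent P A) (x : P) (l : List (A × P)) : A :=
  if (∀ i, (hi : i < l.length) → RCAux π x (l.take i) = (l.get ⟨i, hi⟩).1)
  then π (x, l) else π (x, [])
termination_by l.length
decreasing_by all_goals (simp [List.length_take]; omega)

/-- The reality check π_RC of π: π_RC(s) = π(s) if s is possible for π_RC,
    else π_RC(s) = π(⟨x₁⟩). -/
def RC {P A : Type*} [DecidableEq A] (π : Agent P A) : Agent P A :=
  fun h => RCAux π h.1 h.2

/-- A non-extended environment maps even-length histories to percepts,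
    independently of the agent. -/
abbrev Env (P A : Type*) := Option (Hist P A × A) → P

/-- The history x₁y₁...xₙ₊₁ of the interaction of π with non-extended μ. -/
def ihist {P A : Type*} (μ : Env P A) (π : Agent P A) : ℕ → Hist P A
  | 0 => (μ none, [])
  | n+1 =>
    let h := ihist μ π n
    (h.1, h.2 ++ [(π h, μ (some (h, π h)))])

/-!
By strong induction on its length, a history possible for `π` is also possible for `RC π`,
so on it the reality check never fires and `RC π` acts as `π`. Every interaction history of `π`
with a non-extended environment is possible for `π`, hence `RC π` chooses the same action at
each step and, the environment not depending on the agent, receives the same percepts.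
-/

section

variable {P A : Type*}

theorem RC_apply_of_possible [DecidableEq A] {π : Agent P A} {h : Hist P A}
    (hp : Possible (RC π) h) : RC π h = π h :=
  (RCAux.eq_1 π h.1 h.2).trans (if_pos hp)

theorem Possible.take {π : Agent P A} {x : P} {l : List (A × P)} (hp : Possible π (x, l))
    (k : ℕ) : Possible π (x, l.take k) := by
  intro i hi
  simp only [List.length_take, lt_min_iff] at hi
  simpa [List.take_take, Nat.min_eq_left hi.1.le] using hp i hi.2

theorem Possible.append_action {π : Agent P A} {x : P} {l : List (A × P)}
    (hp : Possible π (x, l)) (p : P) : Possible π (x, l ++ [(π (x, l), p)]) := by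
  intro i hi
  simp only [List.length_append, List.length_singleton] at hi
  rcases Nat.lt_succ_iff_lt_or_eq.mp hi with hi | rfl
  · simpa [List.take_append_of_le_length hi.le, List.getElem_append_left hi] using hp i hi
  · simp

theorem RC_eq_of_possible [DecidableEq A] (π : Agent P A) (x : P) (l : List (A × P))
    (hp : Possible π (x, l)) : RC π (x, l) = π (x, l) := by
  induction hn : l.length using Nat.strong_induction_on generalizing l with | _ n ih => ?_
  have hpRC : Possible (RC π) (x, l) := fun i hi => by
    rw [ih _ (by simp [← hn, hi]) _ (hp.take i) rfl]
    exact hp i hi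
  exact RC_apply_of_possible hpRC

theorem possible_ihist (μ : Env P A) (π : Agent P A) (n : ℕ) : Possible π (ihist μ π n) := by
  induction n with
  | zero => intro i hi; simp [ihist] at hi
  | succ n ih => exact Possible.append_action ih _

end

theorem realityCheck_nonextended_general {P A : Type*}
    [DecidableEq A]
    (π : Agent P A) (μ : Env P A) :
    ∀ n : ℕ, ihist μ (RC π) n = ihist μ π n := by
  intro n
  induction n with
  | zero => rfl
  | succ n ih =>
    have hRC : RC π (ihist μ π n) = π (ihist μ π n) :=
      RC_eq_of_possible π _ _ (possible_ihist μ π n)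
    simp only [ihist, ih, hRC]

/-- Equivalence in non-extended RL: the result of π_RC interacting with any
    non-extended environment equals the result of π interacting with it. -/
theorem realityCheck_nonextended {P A : Type*}
    [Fintype P] [Fintype A] [DecidableEq A]
    (π : Agent P A) (μ : Env P A) :
    ∀ n : ℕ, ihist μ (RC π) n = ihist μ π n :=
  realityCheck_nonextended_general π μ
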